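/- Let K be a field of characteristic zero and let D = ∂_{x_1} + (a_2·x_2 + b_2)·∂_{x_2} + b_3·∂_{x_3} be the K-derivation of K[x_1,x_2,x_3] with a_2, b_2 ∈ K[x_1] and b_3 ∈ K[x_1,x_2]. Write b_3 = b_3^{(v)}·x_2^v + ⋯ + b_3^{(1)}·x_2 + b_3^{(0)} with each b_3^{(j)} ∈ K[x_1] and b_3^{(v)} ≠ 0 (so v = deg_{x_2} b_3). If deg a_2 > deg b_3^{(v)} (degrees in x_1), then Im D = D(K[x_1,x_2,x_3]) is not a Mathieu–Zhao space of K[x_1,x_2,x_3]. -/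

import Mathlib

/-!
Since `D x₁ = 1`, the image of `D` contains `1`, and a Mathieu–Zhao space containing `1` is the
whole ring; so it suffices to show that `x₂ ^ (v + 1)` is not of the form `D f`.

Read `K[x₁, x₂, x₃]` as `K[x₁][x₂][x₃]` and write `f = ∑ fₖ x₃ᵏ`. Then `D f = x₂ ^ (v + 1)` is the
cascade `D₁₂ fₖ + (k + 1) b₃ fₖ₊₁ = [k = 0] x₂ ^ (v + 1)` with `D₁₂ = ∂₁ + (a₂ x₂ + b₂) ∂₂`.
Since `deg a₂ ≥ 1`, `D₁₂` keeps the `x₂`-degree `s ≥ 1` of `q` and turns its leading coefficient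
`u` into `u' + s a₂ u`, of `x₁`-degree `deg a₂ + deg u`. Hence a polynomial of positive
`x₂`-degree whose leading coefficient has `x₁`-degree `< deg a₂` is not in the image of `D₁₂`.
Going down the cascade, `f₁` has `x₂`-degree `0`: if `v = 0` because `D₁₂ q` has `x₂`-degree `0`
only if `q` has; if `v ≥ 1` because the top coefficient `fₙ` lies in `ker D₁₂ = K`, so `n ≥ 2`
would put `-n fₙ b₃` in the image of `D₁₂`, hence `n ≤ 1` and `f₁ ∈ ker D₁₂`. Then
`D₁₂ f₀ = x₂ ^ (v + 1) - b₃ f₁` has leading coefficient `1`, a contradiction.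
-/

open MvPolynomial

/-- A `K`-subspace `M` of `R` is a Mathieu–Zhao space if for all `a, b ∈ R` such that
`a ^ m ∈ M` for all `m ≥ 1`, there exists `N` such that `b * a ^ m ∈ M` for all `m ≥ N`. -/
def IsMathieuZhao (K : Type*) {R : Type*} [Field K] [CommRing R] [Algebra K R]
    (M : Submodule K R) : Prop :=
  ∀ a b : R, (∀ m : ℕ, 1 ≤ m → a ^ m ∈ M) →
    ∃ N : ℕ, ∀ m : ℕ, N ≤ m → b * a ^ m ∈ M

/-- A `K`-derivation `D` of `R` is simple if the only ideals `I` of `R` with `D(I) ⊆ I`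
are `0` and `R`. -/
def Derivation.IsSimple {K R : Type*} [CommRing K] [CommRing R] [Algebra K R]
    (D : Derivation K R R) : Prop :=
  ∀ I : Ideal R, (∀ a ∈ I, D a ∈ I) → I = ⊥ ∨ I = ⊤

open scoped Polynomial

theorem IsMathieuZhao.eq_top_of_one_mem {K R : Type*} [Field K] [CommRing R] [Algebra K R]
    {M : Submodule K R} (hM : IsMathieuZhao K M) (h1 : (1 : R) ∈ M) : M = ⊤ := by
  refine eq_top_iff.mpr fun b _ => ?_
  obtain ⟨N, hN⟩ := hM 1 b fun m _ => by rwa [one_pow]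
  simpa using hN N le_rfl

namespace Polynomial

section Extension

variable {R A : Type*} [CommRing R] [CommRing A] [Algebra R A]

noncomputable def extendDerivation (d : Derivation R A A) (b : A[X]) : Derivation R A[X] A[X] :=
  PolynomialModule.equivPolynomialSelf.toLinearMap.compDer d.mapCoeffs
    + b • (derivative' (R := A)).restrictScalars R

variable (d : Derivation R A A) (b : A[X])

lemma coeff_extendDerivation (p : A[X]) (n : ℕ) :
    (extendDerivation d b p).coeff n = d (p.coeff n) + (b * derivative p).coeff n := rfl

@[simp] lemma extendDerivation_C (a : A) : extendDerivation d b (C a) = C (d a) := by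
  ext n
  rw [coeff_extendDerivation, derivative_C, mul_zero, coeff_zero, add_zero, coeff_C, coeff_C,
    apply_ite d, d.map_zero]

@[simp] lemma extendDerivation_X : extendDerivation d b X = b := by
  ext n
  rw [coeff_extendDerivation, derivative_X, mul_one, coeff_X, apply_ite d, d.map_one_eq_zero,
    d.map_zero, ite_self, zero_add]

lemma coeff_extendDerivation_C (a : A) (p : A[X]) (n : ℕ) :
    (extendDerivation d (C a) p).coeff n = d (p.coeff n) + a * (p.coeff (n + 1) * (n + 1)) := by
  rw [coeff_extendDerivation, coeff_C_mul, coeff_derivative]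

end Extension

lemma natDegree_derivative_add_mul {R : Type*} [Semiring R] [NoZeroDivisors R] {a u : R[X]}
    (ha : 0 < a.natDegree) (hu : u ≠ 0) :
    (derivative u + a * u).natDegree = a.natDegree + u.natDegree := by
  have ha0 : a ≠ 0 := ne_zero_of_natDegree_gt ha
  have := natDegree_derivative_le u
  rw [natDegree_add_eq_right_of_natDegree_lt] <;> rw [natDegree_mul ha0 hu]
  omega

lemma coeff_sum_range_C_mul_X_pow {R : Type*} [Semiring R] (f : ℕ → R) (n k : ℕ) :
    (∑ j ∈ Finset.range n, C (f j) * X ^ j).coeff k = if k < n then f k else 0 := by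
  simp

lemma natDegree_sum_range_C_mul_X_pow {R : Type*} [Semiring R] {f : ℕ → R} {n : ℕ}
    (hn : f n ≠ 0) : (∑ j ∈ Finset.range (n + 1), C (f j) * X ^ j).natDegree = n := by
  refine natDegree_eq_of_le_of_coeff_ne_zero (natDegree_le_iff_coeff_eq_zero.mpr fun k hk => ?_)
    (by rwa [coeff_sum_range_C_mul_X_pow, if_pos n.lt_succ_self])
  rw [coeff_sum_range_C_mul_X_pow, if_neg (by omega)]

lemma leadingCoeff_sum_range_C_mul_X_pow {R : Type*} [Semiring R] {f : ℕ → R} {n : ℕ}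
    (hn : f n ≠ 0) : (∑ j ∈ Finset.range (n + 1), C (f j) * X ^ j).leadingCoeff = f n := by
  rw [leadingCoeff, natDegree_sum_range_C_mul_X_pow hn, coeff_sum_range_C_mul_X_pow,
    if_pos n.lt_succ_self]

end Polynomial

namespace MvPolynomial

variable {σ R A : Type*} [CommSemiring R] [CommSemiring A] [Algebra R A]

theorem algHom_derivation_apply (φ : MvPolynomial σ R →ₐ[R] A)
    {D : Derivation R (MvPolynomial σ R) (MvPolynomial σ R)} {δ : Derivation R A A}
    (h : ∀ i, φ (D (X i)) = δ (φ (X i))) (p : MvPolynomial σ R) : φ (D p) = δ (φ p) := by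
  induction p using MvPolynomial.induction_on with
  | C a => rw [derivation_C, map_zero, algHom_C, δ.map_algebraMap]
  | add p q hp hq => rw [map_add, map_add, map_add, hp, hq, map_add]
  | mul_X p i hp => simp only [Derivation.leibniz, smul_eq_mul, map_add, map_mul, hp, h]

theorem exists_aeval_X_eq_of_mem_supported_singleton {i : σ} {p : MvPolynomial σ R}
    (hp : p ∈ supported R {i}) : ∃ q : R[X], Polynomial.aeval (X i) q = p := by
  rwa [supported_eq_adjoin_X, Set.image_singleton, Algebra.adjoin_singleton_eq_range_aeval] at hp

theorem degreeOf_aeval_X (i : σ) (q : R[X]) :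
    degreeOf i (Polynomial.aeval (X i : MvPolynomial σ R) q) = q.natDegree := by
  classical
  rw [degreeOf_eq_natDegree, ← Polynomial.aeval_algHom_apply, ← Polynomial.aeval_algHom_apply]
  simp only [rename_X, Equiv.optionSubtypeNe_symm_self]
  rw [optionEquivLeft_X_none,
    ← Polynomial.aeval_map_algebraMap (MvPolynomial {b // b ≠ i} R), Polynomial.aeval_X_left_apply,
    Polynomial.natDegree_map_eq_of_injective (f := algebraMap R _) (C_injective _ R)]

section Iterated

variable {K : Type*} [CommSemiring K]

variable (K) in
noncomputable def toIteratedPolynomial :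
    MvPolynomial (Fin 3) K →ₐ[K] K[X][X][X] :=
  aeval (![Polynomial.C (Polynomial.C Polynomial.X), Polynomial.C Polynomial.X, Polynomial.X] :
    Fin 3 → K[X][X][X])

@[simp] theorem toIteratedPolynomial_X_zero :
    toIteratedPolynomial K (X 0) = Polynomial.C (Polynomial.C Polynomial.X) := by
  simp [toIteratedPolynomial]

@[simp] theorem toIteratedPolynomial_X_one :
    toIteratedPolynomial K (X 1) = Polynomial.C Polynomial.X := by
  simp [toIteratedPolynomial]

@[simp] theorem toIteratedPolynomial_X_two :
    toIteratedPolynomial K (X 2) = Polynomial.X := by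
  simp [toIteratedPolynomial]

@[simp] theorem toIteratedPolynomial_aeval_X_zero (q : K[X]) :
    toIteratedPolynomial K (Polynomial.aeval (X 0) q) = Polynomial.C (Polynomial.C q) := by
  induction q using Polynomial.induction_on' <;>
    simp_all [← Polynomial.C_mul_X_pow_eq_monomial]

end Iterated

end MvPolynomial

namespace Polynomial

variable {K : Type*} [Field K]

noncomputable def affineDerivation (α β : K[X]) : Derivation K K[X][X] K[X][X] :=
  extendDerivation derivative' (C α * X + C β)

variable {α β : K[X]}

lemma coeff_affineDerivation (q : K[X][X]) (n : ℕ) :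
    (affineDerivation α β q).coeff n =
      derivative (q.coeff n) + α * C (n : K) * q.coeff n + β * (q.coeff (n + 1) * (n + 1)) := by
  rw [affineDerivation, coeff_extendDerivation, add_mul, coeff_add, coeff_C_mul,
    mul_assoc, coeff_C_mul, coeff_derivative, derivative'_apply]
  rcases n with _ | n
  · simp
  · rw [coeff_X_mul, coeff_derivative]
    simp only [Nat.cast_add, Nat.cast_one, map_add, map_natCast, map_one]
    ring

@[simp] lemma affineDerivation_C (u : K[X]) : affineDerivation α β (C u) = C (derivative u) := by
  simp [affineDerivation]

@[simp] lemma affineDerivation_X : affineDerivation α β X = C α * X + C β := by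
  simp [affineDerivation]

variable [CharZero K]

lemma natDegree_affineDerivation (hα : 0 < α.natDegree) {q : K[X][X]} (hq : 0 < q.natDegree) :
    (affineDerivation α β q).natDegree = q.natDegree ∧
      (affineDerivation α β q).leadingCoeff.natDegree = α.natDegree + q.leadingCoeff.natDegree := by
  set s := q.natDegree
  have hs : (s : K) ≠ 0 := by exact_mod_cast hq.ne'
  have htop : (affineDerivation α β q).coeff s =
      derivative q.leadingCoeff + α * C (s : K) * q.leadingCoeff := by
    rw [coeff_affineDerivation, coeff_eq_zero_of_natDegree_lt (Nat.lt_succ_self s)]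
    simp only [zero_mul, mul_zero, add_zero]
    rfl
  have hlc := natDegree_derivative_add_mul (a := α * C (s : K)) (by rwa [natDegree_mul_C hs])
    (leadingCoeff_ne_zero.mpr (ne_zero_of_natDegree_gt hq))
  rw [natDegree_mul_C hs, ← htop] at hlc
  have hdeg : (affineDerivation α β q).natDegree = s := by
    refine natDegree_eq_of_le_of_coeff_ne_zero ?_ (ne_zero_of_natDegree_gt (n := 0) (by omega))
    refine natDegree_le_iff_coeff_eq_zero.mpr fun N hN => ?_
    rw [coeff_affineDerivation, coeff_eq_zero_of_natDegree_lt (by omega : s < N),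
      coeff_eq_zero_of_natDegree_lt (by omega : s < N + 1)]
    simp
  exact ⟨hdeg, by rw [leadingCoeff, hdeg, hlc]⟩

lemma natDegree_eq_zero_of_natDegree_affineDerivation (hα : 0 < α.natDegree) {q : K[X][X]}
    (h : (affineDerivation α β q).natDegree = 0) : q.natDegree = 0 := by
  by_contra hq
  have := (natDegree_affineDerivation (β := β) hα (Nat.pos_of_ne_zero hq)).1
  omega

lemma exists_eq_C_C_of_affineDerivation_eq_zero (hα : 0 < α.natDegree) {q : K[X][X]}
    (h : affineDerivation α β q = 0) : ∃ c : K, q = C (C c) := by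
  obtain ⟨u, rfl⟩ := natDegree_eq_zero.mp
    (natDegree_eq_zero_of_natDegree_affineDerivation hα (by rw [h, natDegree_zero]))
  rw [affineDerivation_C, C_eq_zero, derivative_eq_zero] at h
  obtain ⟨c, rfl⟩ := natDegree_eq_zero.mp h
  exact ⟨c, rfl⟩

lemma le_natDegree_leadingCoeff_affineDerivation (hα : 0 < α.natDegree) {q : K[X][X]}
    (h : 0 < (affineDerivation α β q).natDegree) :
    α.natDegree ≤ (affineDerivation α β q).leadingCoeff.natDegree := by
  have hq : 0 < q.natDegree := by
    refine Nat.pos_of_ne_zero fun hq => ?_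
    obtain ⟨u, rfl⟩ := natDegree_eq_zero.mp hq
    rw [affineDerivation_C, natDegree_C] at h
    exact h.false
  rw [(natDegree_affineDerivation hα hq).2]
  omega

section Cascade

variable {B : K[X][X]} {F : K[X][X][X]}
  (hE : ∀ k ≠ 0, affineDerivation α β (F.coeff k) + B * (F.coeff (k + 1) * (k + 1)) = 0)
include hE

lemma natDegree_coeff_eq_zero_of_natDegree_eq_zero (hα : 0 < α.natDegree) (hB : B.natDegree = 0)
    {k : ℕ} (hk : k ≠ 0) : (F.coeff k).natDegree = 0 := by
  rcases lt_or_ge F.natDegree k with hFk | hFk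
  · rw [coeff_eq_zero_of_natDegree_lt hFk, natDegree_zero]
  refine Nat.decreasingInduction' (P := fun j => (F.coeff j).natDegree = 0) (fun j _ hkj ih => ?_)
    (hFk.trans (Nat.le_succ _)) ?_
  · refine natDegree_eq_zero_of_natDegree_affineDerivation (β := β) hα ?_
    rw [eq_neg_of_add_eq_zero_left (hE j (by omega)), natDegree_neg]
    have hcast : ((j : K[X][X]) + 1).natDegree ≤ 0 := by
      exact_mod_cast (natDegree_natCast (j + 1)).le
    exact Nat.le_zero.mp (natDegree_mul_le_of_le hB.le (natDegree_mul_le_of_le ih.le hcast))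
  · rw [coeff_eq_zero_of_natDegree_lt (Nat.lt_succ_self _), natDegree_zero]

lemma natDegree_le_one_of_natDegree_pos (hB : B.leadingCoeff.natDegree < α.natDegree)
    (hB0 : 0 < B.natDegree) : F.natDegree ≤ 1 := by
  have hα : 0 < α.natDegree := by omega
  by_contra! hF
  obtain ⟨m, hm⟩ : ∃ m, F.natDegree = m + 1 := ⟨F.natDegree - 1, by omega⟩
  have htop := hE (m + 1) (by omega)
  rw [coeff_eq_zero_of_natDegree_lt (n := m + 1 + 1) (by omega), zero_mul, mul_zero,
    add_zero] at htop
  obtain ⟨c, hc⟩ := exists_eq_C_C_of_affineDerivation_eq_zero hα htop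
  have hc0 : c ≠ 0 := by
    rintro rfl
    rw [map_zero, map_zero, ← hm] at hc
    exact leadingCoeff_ne_zero.mpr (ne_zero_of_natDegree_gt hF) hc
  have hcm : (-(c * (m + 1)) : K) ≠ 0 :=
    neg_ne_zero.mpr (mul_ne_zero hc0 (Nat.cast_add_one_ne_zero m))
  have hnext := eq_neg_of_add_eq_zero_left (hE m (by omega))
  rw [hc, show -(B * (C (C c) * ((m : K[X][X]) + 1))) = B * C (C (-(c * (m + 1)))) by
    simp only [map_neg, map_mul, map_add, map_natCast, map_one]; ring] at hnext
  have hdeg : (B * C (C (-(c * (m + 1))))).natDegree = B.natDegree :=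
    natDegree_mul_C (C_ne_zero.mpr hcm)
  have := le_natDegree_leadingCoeff_affineDerivation (β := β) hα (q := F.coeff m)
    (by rw [hnext, hdeg]; exact hB0)
  rw [hnext, leadingCoeff_mul, leadingCoeff_C, natDegree_mul_C hcm] at this
  omega

lemma natDegree_coeff_one_eq_zero (hB : B.leadingCoeff.natDegree < α.natDegree) :
    (F.coeff 1).natDegree = 0 := by
  have hα : 0 < α.natDegree := by omega
  rcases Nat.eq_zero_or_pos B.natDegree with hB0 | hB0
  · exact natDegree_coeff_eq_zero_of_natDegree_eq_zero hE hα hB0 one_ne_zero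
  · have h1 := hE 1 one_ne_zero
    have hF := natDegree_le_one_of_natDegree_pos hE hB hB0
    rw [coeff_eq_zero_of_natDegree_lt (n := 1 + 1) (by omega), zero_mul, mul_zero, add_zero] at h1
    obtain ⟨c, hc⟩ := exists_eq_C_C_of_affineDerivation_eq_zero hα h1
    rw [hc, natDegree_C]

end Cascade

theorem extendDerivation_affineDerivation_ne {B : K[X][X]}
    (hB : B.leadingCoeff.natDegree < α.natDegree) (F : K[X][X][X]) :
    extendDerivation (affineDerivation α β) (C B) F ≠ C (X ^ (B.natDegree + 1)) := by
  intro hF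
  have hα : 0 < α.natDegree := by omega
  have hE (k : ℕ) :
      affineDerivation α β (F.coeff k) + B * (F.coeff (k + 1) * ((k : K[X][X]) + 1)) =
        (C (X ^ (B.natDegree + 1))).coeff k := by
    rw [← hF, coeff_extendDerivation_C]
  have h1 := natDegree_coeff_one_eq_zero (fun k hk => by rw [hE k, coeff_C_of_ne_zero hk]) hB
  have h0 := hE 0
  simp only [coeff_C_zero, Nat.cast_zero, zero_add, mul_one] at h0
  rw [← eq_sub_iff_add_eq] at h0
  have hlt : (B * F.coeff 1).natDegree < (X ^ (B.natDegree + 1) : K[X][X]).natDegree := by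
    have := natDegree_mul_le_of_le le_rfl h1.le (p := B)
    rw [natDegree_X_pow]
    omega
  have := le_natDegree_leadingCoeff_affineDerivation (β := β) hα (q := F.coeff 0)
    (by rw [h0, natDegree_sub_eq_left_of_natDegree_lt hlt, natDegree_X_pow]; omega)
  rw [h0, leadingCoeff_sub_of_degree_lt (degree_lt_degree hlt), leadingCoeff_X_pow,
    natDegree_one] at this
  omega

end Polynomial

/-- For `D = ∂_{x₁} + (a₂ x₂ + b₂) ∂_{x₂} + b₃ ∂_{x₃}` with
`a₂, b₂ ∈ K[x₁]` and `b₃ = Σ_{j=0}^{v} b₃⁽ʲ⁾ x₂^j` where each `b₃⁽ʲ⁾ ∈ K[x₁]` and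
`b₃⁽ᵛ⁾ ≠ 0`: if `deg_{x₁} a₂ > deg_{x₁} b₃⁽ᵛ⁾`, then `Im D` is not a Mathieu–Zhao
space of `K[x₁, x₂, x₃]`. -/
theorem statement11 (K : Type*) [Field K] [CharZero K]
    (a2 b2 b3 : MvPolynomial (Fin 3) K)
    (ha2 : a2 ∈ supported K ({0} : Set (Fin 3)))
    (hb2 : b2 ∈ supported K ({0} : Set (Fin 3)))
    (v : ℕ) (b3c : ℕ → MvPolynomial (Fin 3) K)
    (hb3c : ∀ j : ℕ, b3c j ∈ supported K ({0} : Set (Fin 3)))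
    (hb3 : b3 = ∑ j ∈ Finset.range (v + 1), b3c j * X 1 ^ j)
    (hb3v : b3c v ≠ 0)
    (D : Derivation K (MvPolynomial (Fin 3) K) (MvPolynomial (Fin 3) K))
    (hD1 : D (X 0) = 1)
    (hD2 : D (X 1) = a2 * X 1 + b2)
    (hD3 : D (X 2) = b3)
    (hdeg : degreeOf (0 : Fin 3) (b3c v) < degreeOf (0 : Fin 3) a2) :
    ¬ IsMathieuZhao K (LinearMap.range D.toLinearMap) := by
  intro hMZ
  obtain ⟨f, hf⟩ : X 1 ^ (v + 1) ∈ LinearMap.range D.toLinearMap := by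
    rw [hMZ.eq_top_of_one_mem ⟨X 0, hD1⟩]
    exact Submodule.mem_top
  obtain ⟨α, rfl⟩ := exists_aeval_X_eq_of_mem_supported_singleton ha2
  obtain ⟨β, rfl⟩ := exists_aeval_X_eq_of_mem_supported_singleton hb2
  choose γ hγ using fun j => exists_aeval_X_eq_of_mem_supported_singleton (hb3c j)
  have hγv : γ v ≠ 0 := fun h => hb3v (by rw [← hγ v, h, map_zero])
  set B : K[X][X] := ∑ j ∈ Finset.range (v + 1), Polynomial.C (γ j) * Polynomial.X ^ j
  have hD (g : MvPolynomial (Fin 3) K) : toIteratedPolynomial K (D g) =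
      Polynomial.extendDerivation (Polynomial.affineDerivation α β) (Polynomial.C B)
        (toIteratedPolynomial K g) := by
    refine algHom_derivation_apply (A := K[X][X][X]) _ (fun i => ?_) g
    fin_cases i <;> simp [hD1, hD2, hD3, hb3, ← hγ, B]
  refine Polynomial.extendDerivation_affineDerivation_ne (α := α) (β := β) (B := B) ?_
    (toIteratedPolynomial K f) ?_
  · rw [Polynomial.leadingCoeff_sum_range_C_mul_X_pow hγv, ← degreeOf_aeval_X (0 : Fin 3),
      ← degreeOf_aeval_X (0 : Fin 3), hγ]
    exact hdeg
  · rw [← hD, show D f = X 1 ^ (v + 1) from hf, Polynomial.natDegree_sum_range_C_mul_X_pow hγv]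
    simp
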